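/- On the N-photon Fock space with M modes, the generalized Pauli operator Λ_j = X Z^j satisfies Λ_j^M = ω^{j N M(M−1)/2} · Id, where ω = exp(2πi/M); equivalently Λ_j^M = (−1)^{j N (M−1)} Id. -/

import Mathlib

open Finset

noncomputable section

/-- Total photon number `|n|`. -/
def totalPhotons {M : ℕ} (n : Fin M → ℕ) : ℕ := ∑ m : Fin M, n m

/-- Clock label `μ(n) = Σ m·n(m)`. -/
def clockLabel {M : ℕ} (n : Fin M → ℕ) : ℕ := ∑ m : Fin M, (m : ℕ) * n m

/-- `ω = exp(2πi/M)`. -/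
def omegaM (M : ℕ) : ℂ := Complex.exp (2 * Real.pi * Complex.I / M)

/-- The Fock space over `M` modes: amplitudes on occupation vectors. -/
abbrev Fock (M : ℕ) := (Fin M → ℕ) → ℂ

/-- Mode-shift operator: `X |n⟩ = |X·n⟩` with `(X·n)(m) = n(m−1)` mod `M`. -/
def fockX {M : ℕ} [NeZero M] (f : Fock M) : Fock M := fun v => f (fun m => v (m + 1))

/-- Phase-shift operator: `Z |n⟩ = ω^{μ(n)} |n⟩`. -/
def fockZ {M : ℕ} (f : Fock M) : Fock M := fun v => omegaM M ^ clockLabel v * f v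

/-- Fock basis state `|n⟩`. -/
def fockDelta {M : ℕ} (n : Fin M → ℕ) : Fock M := fun v => if v = n then 1 else 0

/-- Generalized Pauli operator `Λ_j = X Z^j`, acting by
`Λ_j |n⟩ = ω^{j μ(n)} |X·n⟩`. -/
def fockLambda {M : ℕ} [NeZero M] (j : ℤ) (f : Fock M) : Fock M :=
  fockX (fun v => omegaM M ^ (j * (clockLabel v : ℤ)) * f v)

/-!
`Λ_j` maps `|p⟩` to `ω^{j μ(p)} |X·p⟩`, so `Λ_j^M |n⟩` is `|X^M·n⟩ = |n⟩` times `ω` raised to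
`j Σ_{i<M} μ(X^i·n)`. Over a full cycle of shifts every mode `l` visits every position once, so
this sum is `(0 + 1 + ⋯ + (M-1)) |n| = N M(M-1)/2`, and `ω^{M(M-1)/2} = e^{iπ(M-1)} = (-1)^{M-1}`.
-/

theorem omegaM_ne_zero (M : ℕ) : omegaM M ≠ 0 := Complex.exp_ne_zero _

section

variable {M : ℕ} [NeZero M]

open Fin.NatCast

def modeShift (n : Fin M → ℕ) : Fin M → ℕ := fun m => n (m - 1)

theorem modeShift_iterate_apply (k : ℕ) (n : Fin M → ℕ) (m : Fin M) :
    modeShift^[k] n m = n (m - k) := by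
  induction k generalizing m with
  | zero => simp
  | succ k ih =>
    rw [Function.iterate_succ_apply', modeShift, ih]
    congr 1
    push_cast
    abel

theorem modeShift_iterate_self (n : Fin M → ℕ) : modeShift^[M] n = n := by
  funext m
  simp [modeShift_iterate_apply]

theorem fockLambda_smul (j : ℤ) (c : ℂ) (f : Fock M) :
    fockLambda j (c • f) = c • fockLambda j f := by
  funext v
  simp only [fockLambda, fockX, Pi.smul_apply, smul_eq_mul]
  ring

theorem fockLambda_fockDelta (j : ℤ) (p : Fin M → ℕ) :
    fockLambda j (fockDelta p) = omegaM M ^ (j * (clockLabel p : ℤ)) • fockDelta (modeShift p) := by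
  have shift_eq_iff (v : Fin M → ℕ) : (fun m => v (m + 1)) = p ↔ v = modeShift p := by
    constructor
    · rintro rfl
      funext m
      simp [modeShift]
    · rintro rfl
      funext m
      simp [modeShift]
  funext v
  simp only [fockLambda, fockX, fockDelta, Pi.smul_apply, smul_eq_mul]
  by_cases h : (fun m => v (m + 1)) = p
  · rw [if_pos h, if_pos ((shift_eq_iff v).mp h), h]
  · rw [if_neg h, if_neg (mt (shift_eq_iff v).mpr h), mul_zero, mul_zero]

theorem fockLambda_iterate_fockDelta (j : ℤ) (k : ℕ) (n : Fin M → ℕ) :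
    (fockLambda j)^[k] (fockDelta n) =
      omegaM M ^ (j * (∑ i ∈ range k, clockLabel (modeShift^[i] n) : ℕ)) •
        fockDelta (modeShift^[k] n) := by
  induction k with
  | zero => simp
  | succ k ih =>
    rw [Function.iterate_succ_apply', ih, fockLambda_smul, fockLambda_fockDelta, smul_smul,
      ← zpow_add₀ (omegaM_ne_zero M), sum_range_succ, ← Function.iterate_succ_apply' modeShift]
    congr 2
    push_cast
    ring

theorem sum_val_add_left (l : Fin M) : ∑ i : Fin M, ((l + i : Fin M) : ℕ) = ∑ k ∈ range M, k :=
  (Equiv.sum_comp (Equiv.addLeft l) (fun i : Fin M => (i : ℕ))).trans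
    (Fin.sum_univ_eq_sum_range id M)

theorem clockLabel_modeShift_iterate (i : ℕ) (n : Fin M → ℕ) :
    clockLabel (modeShift^[i] n) = ∑ l : Fin M, ((l + i : Fin M) : ℕ) * n l := by
  rw [clockLabel, ← Equiv.sum_comp (Equiv.addRight (i : Fin M))]
  simp [modeShift_iterate_apply]

theorem sum_clockLabel_modeShift_iterate (n : Fin M → ℕ) :
    ∑ i ∈ range M, clockLabel (modeShift^[i] n) = (∑ k ∈ range M, k) * totalPhotons n := by
  calc ∑ i ∈ range M, clockLabel (modeShift^[i] n)
      = ∑ i : Fin M, ∑ l : Fin M, ((l + i : Fin M) : ℕ) * n l := by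
        rw [← Fin.sum_univ_eq_sum_range]
        simp only [clockLabel_modeShift_iterate, Fin.cast_val_eq_self]
    _ = ∑ l : Fin M, (∑ i : Fin M, ((l + i : Fin M) : ℕ)) * n l := by
        rw [sum_comm]
        simp only [sum_mul]
    _ = (∑ k ∈ range M, k) * totalPhotons n := by
        simp only [sum_val_add_left, totalPhotons, mul_sum]

theorem omegaM_zpow_sum_range :
    omegaM M ^ ((∑ k ∈ range M, k : ℕ) : ℤ) = (-1 : ℂ) ^ ((M : ℤ) - 1) := by
  have hM : (M : ℂ) ≠ 0 := NeZero.ne _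
  have gauss := congrArg (Nat.cast : ℕ → ℂ) (sum_range_id_mul_two M)
  push_cast [Nat.cast_sub NeZero.one_le] at gauss
  rw [omegaM, ← Complex.exp_int_mul, ← Complex.exp_pi_mul_I, ← Complex.exp_int_mul]
  congr 1
  push_cast
  field_simp
  linear_combination gauss

end

/-- on the `N`-photon Fock space with `M` modes,
`Λ_j^M = (−1)^{jN(M−1)} Id`. -/
theorem fockLambda_pow_M (M N : ℕ) [NeZero M] (j : ℤ) (n : Fin M → ℕ)
    (hn : totalPhotons n = N) :
    (fockLambda j (M := M))^[M] (fockDelta n)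
      = ((-1 : ℂ) ^ (j * (N : ℤ) * ((M : ℤ) - 1))) • fockDelta n := by
  rw [fockLambda_iterate_fockDelta, modeShift_iterate_self, sum_clockLabel_modeShift_iterate, hn]
  congr 1
  calc omegaM M ^ (j * (((∑ k ∈ range M, k) * N : ℕ) : ℤ))
      = (omegaM M ^ ((∑ k ∈ range M, k : ℕ) : ℤ)) ^ (j * N) := by
        rw [← zpow_mul]
        push_cast
        ring_nf
    _ = (-1 : ℂ) ^ (j * (N : ℤ) * ((M : ℤ) - 1)) := by
        rw [omegaM_zpow_sum_range, ← zpow_mul]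
        ring_nf
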